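/- Let G be a 2-group and let F : X → Y be any morphism of left G-torsors. Then F is an equivalence (its underlying functor is an equivalence of categories, and hence F is an equivalence of left G-modules). -/

import Mathlib

namespace BraidedExt

open CategoryTheory MonoidalCategory

universe v₁ v₂ v₃ u₁ u₂ u₃

variable (C : Type u₁) [Category.{v₁} C] [MonoidalCategory C]

/-- A left module category over a monoidal category `C`: a category `X` with an action
bifunctor, associativity and unit isomorphisms, satisfying naturality, pentagon and
triangle coherence (equivalently, a pseudofunctor from the delooping of `C` to `Cat`). -/
structure LeftModule (X : Type u₂) [Category.{v₂} X] where
  act : C ⥤ X ⥤ X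
  assoc : ∀ (c c' : C) (x : X), (act.obj (c ⊗ c')).obj x ≅ (act.obj c).obj ((act.obj c').obj x)
  unitor : ∀ x : X, (act.obj (𝟙_ C)).obj x ≅ x
  assoc_naturality :
    ∀ {c₁ c₂ c₁' c₂' : C} {x₁ x₂ : X} (f : c₁ ⟶ c₂) (f' : c₁' ⟶ c₂') (g : x₁ ⟶ x₂),
      (act.map (f ⊗ₘ f')).app x₁ ≫ (act.obj (c₂ ⊗ c₂')).map g ≫ (assoc c₂ c₂' x₂).hom =
        (assoc c₁ c₁' x₁).hom ≫ (act.map f).app ((act.obj c₁').obj x₁) ≫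
          (act.obj c₂).map ((act.map f').app x₁ ≫ (act.obj c₂').map g)
  unitor_naturality : ∀ {x₁ x₂ : X} (g : x₁ ⟶ x₂),
    (act.obj (𝟙_ C)).map g ≫ (unitor x₂).hom = (unitor x₁).hom ≫ g
  pentagon : ∀ (c c' c'' : C) (x : X),
    (act.map (α_ c c' c'').hom).app x ≫ (assoc c (c' ⊗ c'') x).hom ≫
        (act.obj c).map (assoc c' c'' x).hom =
      (assoc (c ⊗ c') c'' x).hom ≫ (assoc c c' ((act.obj c'').obj x)).hom
  triangle_right : ∀ (c : C) (x : X),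
    (act.map (ρ_ c).hom).app x = (assoc c (𝟙_ C) x).hom ≫ (act.obj c).map (unitor x).hom
  triangle_left : ∀ (c : C) (x : X),
    (act.map (λ_ c).hom).app x = (assoc (𝟙_ C) c x).hom ≫ (unitor ((act.obj c).obj x)).hom

variable {C}
variable {X : Type u₂} [Category.{v₂} X] {Y : Type u₃} [Category.{v₃} Y]

/-- A morphism of left `C`-module categories: a functor together with coherent natural
isomorphisms `F (c ▷ x) ≅ c ▷ F x`. -/
structure ModHom (M : LeftModule C X) (N : LeftModule C Y) where
  F : X ⥤ Y
  strength : ∀ (c : C) (x : X), F.obj ((M.act.obj c).obj x) ≅ (N.act.obj c).obj (F.obj x)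
  strength_naturality : ∀ {c₁ c₂ : C} (f : c₁ ⟶ c₂) {x₁ x₂ : X} (g : x₁ ⟶ x₂),
    F.map ((M.act.map f).app x₁ ≫ (M.act.obj c₂).map g) ≫ (strength c₂ x₂).hom =
      (strength c₁ x₁).hom ≫ (N.act.map f).app (F.obj x₁) ≫ (N.act.obj c₂).map (F.map g)
  strength_assoc : ∀ (c c' : C) (x : X),
    F.map (M.assoc c c' x).hom ≫ (strength c ((M.act.obj c').obj x)).hom ≫
        (N.act.obj c).map (strength c' x).hom =
      (strength (c ⊗ c') x).hom ≫ (N.assoc c c' (F.obj x)).hom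
  strength_unit : ∀ x : X,
    F.map (M.unitor x).hom = (strength (𝟙_ C) x).hom ≫ (N.unitor (F.obj x)).hom

/-- The data exhibiting a morphism of left `C`-modules as an equivalence of `C`-modules:
a quasi-inverse which is itself a module morphism, together with unit and counit natural
isomorphisms compatible with the module structure. -/
structure ModEquivData {M : LeftModule C X} {N : LeftModule C Y} (F : ModHom M N) where
  G : ModHom N M
  η : 𝟭 X ≅ F.F ⋙ G.F
  ε : G.F ⋙ F.F ≅ 𝟭 Y
  η_mod : ∀ (c : C) (x : X),
    (M.act.obj c).map (η.hom.app x) =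
      η.hom.app ((M.act.obj c).obj x) ≫ G.F.map ((F.strength c x).hom) ≫
        (G.strength c (F.F.obj x)).hom
  ε_mod : ∀ (c : C) (y : Y),
    F.F.map ((G.strength c y).hom) ≫ (F.strength c (G.F.obj y)).hom ≫
        (N.act.obj c).map (ε.hom.app y) =
      ε.hom.app ((N.act.obj c).obj y)

/-- A morphism of left `C`-modules is an equivalence of modules if it admits a
quasi-inverse module morphism with invertible module 2-cells. -/
def IsModEquiv {M : LeftModule C X} {N : LeftModule C Y} (F : ModHom M N) : Prop :=
  Nonempty (ModEquivData F)


/-- A 2-group: a monoidal category whose underlying category is a groupoid and all of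
whose objects are tensor-invertible. -/
class IsTwoGroup (G : Type u₁) [Category.{v₁} G] [MonoidalCategory G] : Prop where
  isIso : ∀ {g h : G} (f : g ⟶ h), IsIso f
  inv_obj : ∀ g : G, ∃ g' : G, Nonempty (g ⊗ g' ≅ 𝟙_ G) ∧ Nonempty (g' ⊗ g ≅ 𝟙_ G)

variable (C)

/-- The characteristic functor `(c, x) ↦ (c ▷ x, x)` of a module category. -/
def chi {X : Type u₂} [Category.{v₂} X] (M : LeftModule C X) : C × X ⥤ X × X where
  obj p := ((M.act.obj p.1).obj p.2, p.2)
  map {p q} f := ((M.act.map f.1).app p.2 ≫ (M.act.obj q.1).map f.2, f.2)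
  map_id p := by
    dsimp
    rw [CategoryTheory.Functor.map_id, CategoryTheory.Functor.map_id]
    dsimp
    simp
  map_comp {p q r} f g := by
    dsimp
    congr 1
    simp only [CategoryTheory.Functor.map_comp, NatTrans.comp_app, Category.assoc]
    rw [NatTrans.naturality_assoc]

/-- A left module `X` over a 2-group `G` is a torsor if `X` is nonempty and the
characteristic functor `G × X → X × X` is an equivalence of categories. -/
def IsTorsor {X : Type u₂} [Category.{v₂} X] (M : LeftModule C X) : Prop :=
  Nonempty X ∧ (chi C M).IsEquivalence

/-!
Fix an object `x₀` of a `G`-torsor `X`. Since `χ` is an equivalence over the second factor, acting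
on `x₀` is an equivalence `G ≌ X`, and a module morphism `F` intertwines `g ↦ g ▷ x₀` with
`g ↦ g ▷ F x₀` through its strength. By two-out-of-three `F` is an equivalence of categories.
Finally the quasi-inverse of any module morphism that is an equivalence inherits a strength,
`F⁻¹ (c ▷ y) ≅ F⁻¹ (c ▷ F F⁻¹ y) ≅ F⁻¹ F (c ▷ F⁻¹ y) ≅ c ▷ F⁻¹ y`, and all coherence conditions
can be checked after applying the faithful functor `F`.
-/

variable {C}

theorem IsTorsor.isEquivalence_flip_obj {M : LeftModule C X} (hM : IsTorsor C M) (x₀ : X) :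
    (M.act.flip.obj x₀).IsEquivalence := by
  have := hM.2
  have chi_map : ∀ {g h : C} (f : g ⟶ h),
      (chi C M).map ((f, 𝟙 x₀) : (g, x₀) ⟶ (h, x₀)) = ((M.act.flip.obj x₀).map f, 𝟙 x₀) := by
    intros; simp [chi]
  have : (M.act.flip.obj x₀).Faithful := ⟨fun {g h} f f' hf =>
    congrArg Prod.fst ((chi C M).map_injective (by rw [chi_map, chi_map, hf]) :
      ((f, 𝟙 x₀) : (g, x₀) ⟶ (h, x₀)) = (f', 𝟙 x₀))⟩
  have : (M.act.flip.obj x₀).Full := ⟨fun {g h} k => by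
    obtain ⟨q, hq⟩ := (chi C M).map_surjective (X := (g, x₀)) (Y := (h, x₀)) (k, 𝟙 x₀)
    have hq₂ : q.2 = 𝟙 x₀ := congrArg Prod.snd hq
    exact ⟨q.1, by simpa [chi, hq₂] using congrArg Prod.fst hq⟩⟩
  have : (M.act.flip.obj x₀).EssSurj := ⟨fun x => by
    let e := (chi C M).objObjPreimageIso (x, x₀)
    exact ⟨((chi C M).objPreimage (x, x₀)).1,
      ⟨(M.act.obj _).mapIso ((CategoryTheory.Prod.snd X X).mapIso e).symm ≪≫
        (CategoryTheory.Prod.fst X X).mapIso e⟩⟩⟩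
  exact {}

theorem LeftModule.assoc_naturality_right (N : LeftModule C Y) (c c' : C) {y₁ y₂ : Y}
    (g : y₁ ⟶ y₂) :
    (N.act.obj (c ⊗ c')).map g ≫ (N.assoc c c' y₂).hom =
      (N.assoc c c' y₁).hom ≫ (N.act.obj c).map ((N.act.obj c').map g) := by
  simpa using N.assoc_naturality (𝟙 c) (𝟙 c') g

namespace ModHom

variable {M : LeftModule C X} {N : LeftModule C Y} (F : ModHom M N)

theorem strength_naturality_left {c₁ c₂ : C} (f : c₁ ⟶ c₂) (x : X) :
    F.F.map ((M.act.map f).app x) ≫ (F.strength c₂ x).hom =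
      (F.strength c₁ x).hom ≫ (N.act.map f).app (F.F.obj x) := by
  simpa using F.strength_naturality f (𝟙 x)

theorem strength_naturality_right (c : C) {x₁ x₂ : X} (g : x₁ ⟶ x₂) :
    F.F.map ((M.act.obj c).map g) ≫ (F.strength c x₂).hom =
      (F.strength c x₁).hom ≫ (N.act.obj c).map (F.F.map g) := by
  simpa using F.strength_naturality (𝟙 c) g

theorem strength_inv_naturality_left {c₁ c₂ : C} (f : c₁ ⟶ c₂) (x : X) :
    (F.strength c₁ x).inv ≫ F.F.map ((M.act.map f).app x) =
      (N.act.map f).app (F.F.obj x) ≫ (F.strength c₂ x).inv := by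
  rw [Iso.inv_comp_eq, ← reassoc_of% F.strength_naturality_left, Iso.hom_inv_id,
    Category.comp_id]

theorem strength_inv_naturality_right (c : C) {x₁ x₂ : X} (g : x₁ ⟶ x₂) :
    (F.strength c x₁).inv ≫ F.F.map ((M.act.obj c).map g) =
      (N.act.obj c).map (F.F.map g) ≫ (F.strength c x₂).inv := by
  rw [Iso.inv_comp_eq, ← reassoc_of% F.strength_naturality_right, Iso.hom_inv_id,
    Category.comp_id]

theorem strength_inv_assoc (c c' : C) (x : X) :
    (F.strength (c ⊗ c') x).inv ≫ F.F.map (M.assoc c c' x).hom =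
      (N.assoc c c' (F.F.obj x)).hom ≫ (N.act.obj c).map (F.strength c' x).inv ≫
        (F.strength c ((M.act.obj c').obj x)).inv := by
  rw [Iso.inv_comp_eq, ← reassoc_of% F.strength_assoc]
  simp

theorem strength_inv_unit (x : X) :
    (F.strength (𝟙_ C) x).inv ≫ F.F.map (M.unitor x).hom = (N.unitor (F.F.obj x)).hom := by
  rw [Iso.inv_comp_eq, F.strength_unit]

def strengthIso (x₀ : X) : M.act.flip.obj x₀ ⋙ F.F ≅ N.act.flip.obj (F.F.obj x₀) :=
  NatIso.ofComponents (fun c => F.strength c x₀) (fun f => F.strength_naturality_left f x₀)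

theorem isEquivalence_of_isTorsor (hM : IsTorsor C M) (hN : IsTorsor C N) :
    F.F.IsEquivalence := by
  obtain ⟨x₀⟩ := hM.1
  have := hM.isEquivalence_flip_obj x₀
  have := hN.isEquivalence_flip_obj (F.F.obj x₀)
  have := Functor.isEquivalence_of_iso (F.strengthIso x₀).symm
  exact Functor.isEquivalence_of_comp_left (M.act.flip.obj x₀) F.F

section Inverse

variable [F.F.IsEquivalence]

-- In `F.F.asEquivalence` the functors `F.F` and `F.F.inv` only appear up to unfolding, which
-- defeats `simp`; hence these retyped copies of its unit and counit, and `map_inv_map` below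
-- in place of `Functor.fun_inv_map`.
noncomputable def unitIso : 𝟭 X ≅ F.F ⋙ F.F.inv := F.F.asEquivalence.unitIso

noncomputable def counitIso : F.F.inv ⋙ F.F ≅ 𝟭 Y := F.F.asEquivalence.counitIso

theorem map_inv_map {y₁ y₂ : Y} (g : y₁ ⟶ y₂) :
    F.F.map (F.F.inv.map g) = F.counitIso.hom.app y₁ ≫ g ≫ F.counitIso.inv.app y₂ :=
  F.F.fun_inv_map y₁ y₂ g

theorem map_unitIso_hom_app (x : X) :
    F.F.map (F.unitIso.hom.app x) = F.counitIso.inv.app (F.F.obj x) :=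
  (F.F.asEquivalence.counitInv_app_functor x).symm

noncomputable def invStrength (c : C) (y : Y) :
    F.F.inv.obj ((N.act.obj c).obj y) ≅ (M.act.obj c).obj (F.F.inv.obj y) :=
  F.F.preimageIso (F.counitIso.app ((N.act.obj c).obj y) ≪≫
    (N.act.obj c).mapIso (F.counitIso.app y).symm ≪≫ (F.strength c (F.F.inv.obj y)).symm)

theorem map_invStrength_hom (c : C) (y : Y) :
    F.F.map (F.invStrength c y).hom = F.counitIso.hom.app ((N.act.obj c).obj y) ≫
      (N.act.obj c).map (F.counitIso.inv.app y) ≫ (F.strength c (F.F.inv.obj y)).inv := by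
  simp [invStrength]

noncomputable def inverse : ModHom N M where
  F := F.F.inv
  strength := F.invStrength
  strength_naturality {_ _} f {_ _} g := F.F.map_injective <| by
    simp [-Functor.fun_inv_map, map_inv_map, map_invStrength_hom,
      reassoc_of% F.strength_inv_naturality_left, F.strength_inv_naturality_right]
  strength_assoc c c' y := F.F.map_injective <| by
    simp [-Functor.fun_inv_map, map_inv_map, map_invStrength_hom, F.strength_inv_assoc,
      F.strength_inv_naturality_right, reassoc_of% N.assoc_naturality_right]
  strength_unit y := F.F.map_injective <| by
    simp [-Functor.fun_inv_map, map_inv_map, map_invStrength_hom, F.strength_inv_unit,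
      N.unitor_naturality]

noncomputable def modEquivData : ModEquivData F where
  G := F.inverse
  η := F.unitIso
  ε := F.counitIso
  η_mod c x := F.F.map_injective <| (cancel_epi (F.strength c x).inv).mp <| by
    simp [inverse, -Functor.fun_inv_map, map_inv_map, map_invStrength_hom, map_unitIso_hom_app,
      F.strength_inv_naturality_right]
  ε_mod c y := by
    simp [inverse, map_invStrength_hom, ← Functor.map_comp]

end Inverse

end ModHom

theorem modHom_of_torsors_isEquiv_general {G : Type u₁} [Category.{v₁} G] [MonoidalCategory G]
    {X : Type u₂} [Category.{v₂} X] {Y : Type u₃} [Category.{v₃} Y]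
    {M : LeftModule G X} {N : LeftModule G Y} (hM : IsTorsor G M) (hN : IsTorsor G N)
    (F : ModHom M N) :
    F.F.IsEquivalence ∧ IsModEquiv F := by
  have := F.isEquivalence_of_isTorsor hM hN
  exact ⟨this, ⟨F.modEquivData⟩⟩

/-- Any morphism of left `G`-torsors over a 2-group `G` is an
equivalence: its underlying functor is an equivalence of categories, and it is an
equivalence of `G`-modules. -/
theorem modHom_of_torsors_isEquiv {G : Type u₁} [Category.{v₁} G] [MonoidalCategory G]
    [IsTwoGroup G] {X : Type u₂} [Category.{v₂} X] {Y : Type u₃} [Category.{v₃} Y]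
    {M : LeftModule G X} {N : LeftModule G Y} (hM : IsTorsor G M) (hN : IsTorsor G N)
    (F : ModHom M N) :
    F.F.IsEquivalence ∧ IsModEquiv F :=
  modHom_of_torsors_isEquiv_general hM hN F

end BraidedExt
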